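/- Let G be a finite simple graph on n ≥ 2 vertices that is not isomorphic to the graph with two vertices and no edges. Then γ_R(G) = 2 if and only if Δ(G) = n − 1. -/

import Mathlib

open SimpleGraph

/-- The closed neighbourhood `N[v]` of a vertex `v`: `v` together with its neighbours. -/
def closedNbhd {V : Type*} (G : SimpleGraph V) (v : V) : Set V :=
  insert v (G.neighborSet v)

/-- A Roman dominating function on `G`: a map into `{0,1,2}` such that every vertex with
value `0` has a neighbour with value `2`. -/
def IsRomanDominating {V : Type*} (G : SimpleGraph V) (f : V → ℕ) : Prop :=
  (∀ v, f v ≤ 2) ∧ ∀ v, f v = 0 → ∃ u, G.Adj v u ∧ f u = 2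

/-- The Roman domination number `γ_R(G)`: the minimum weight of a Roman dominating
function on `G`. -/
noncomputable def romanNumber {V : Type*} [Fintype V] (G : SimpleGraph V) : ℕ :=
  sInf {w | ∃ f : V → ℕ, IsRomanDominating G f ∧ ∑ v, f v = w}

/-- A two-neighbour packing of `G`: a set of vertices such that every closed
neighbourhood contains at most two of its members. -/
def IsTwoNbrPacking {V : Type*} (G : SimpleGraph V) (A : Set V) : Prop :=
  ∀ v, (closedNbhd G v ∩ A).ncard ≤ 2

/-- The two-neighbour packing number `γ̄_R(G)`: the maximum size of a two-neighbour
packing of `G`. -/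
noncomputable def tnpNumber {V : Type*} [Fintype V] (G : SimpleGraph V) : ℕ :=
  sSup {n | ∃ A : Set V, IsTwoNbrPacking G A ∧ A.ncard = n}

/-!
A Roman dominating function of weight `2` either puts `2` on one vertex, which must then
dominate every other vertex, or puts `1` on each of exactly two vertices; in the latter case
the graph has two vertices and, not being edgeless, an edge, whose ends are universal.
Conversely, a universal vertex carrying `2` is a Roman dominating function of weight `2`,
and on at least two vertices no weight below `2` is possible.
-/

namespace SimpleGraph

variable {V : Type*} [Fintype V] {G : SimpleGraph V}

theorem maxDegree_eq_card_sub_one_iff [Nonempty V] [DecidableRel G.Adj] :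
    G.maxDegree = Fintype.card V - 1 ↔ ∃ v, G.IsUniversal v := by
  constructor
  · intro h
    obtain ⟨v, hv⟩ := G.exists_maximal_degree_vertex
    exact ⟨v, (G.degree_eq_card_sub_one v).1 (hv ▸ h)⟩
  · rintro ⟨v, hv⟩
    have hlt := G.maxDegree_lt_card_verts
    have hle := (G.degree_eq_card_sub_one v).2 hv ▸ G.degree_le_maxDegree v
    omega

theorem IsUniversal.of_adj_of_card_eq_two {a b : V} (hc : Fintype.card V = 2)
    (hab : G.Adj a b) : G.IsUniversal a := by
  intro w haw
  obtain rfl : w = b := by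
    by_contra hwb
    have : 2 < Fintype.card V := Fintype.two_lt_card_iff.2 ⟨a, b, w, hab.ne, haw, Ne.symm hwb⟩
    omega
  exact hab

theorem exists_adj_of_not_nonempty_iso_bot {n : ℕ} (hc : Fintype.card V = n)
    (h : ¬ Nonempty (G ≃g (⊥ : SimpleGraph (Fin n)))) : ∃ a b, G.Adj a b := by
  by_contra! hG
  exact h ⟨⟨Fintype.equivFinOfCardEq hc, by simp [hG]⟩⟩

end SimpleGraph

namespace IsRomanDominating

variable {V : Type*} {G : SimpleGraph V} {f : V → ℕ}

theorem one_le_of_forall_ne_two (hf : IsRomanDominating G f) (h2 : ∀ u, f u ≠ 2) (v : V) :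
    1 ≤ f v := by
  by_contra! h0
  obtain ⟨u, -, hu⟩ := hf.2 v (by omega)
  exact h2 u hu

variable [Fintype V]

theorem card_le_sum (hf : IsRomanDominating G f) (h2 : ∀ u, f u ≠ 2) :
    Fintype.card V ≤ ∑ v, f v := by
  simpa using Finset.sum_le_sum fun v (_ : v ∈ Finset.univ) => hf.one_le_of_forall_ne_two h2 v

theorem two_le_sum (hf : IsRomanDominating G f) (hcard : 2 ≤ Fintype.card V) :
    2 ≤ ∑ v, f v := by
  by_cases h2 : ∃ u, f u = 2
  · obtain ⟨u, hu⟩ := h2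
    exact hu ▸ Finset.single_le_sum (fun v _ => Nat.zero_le (f v)) (Finset.mem_univ u)
  · push Not at h2
    exact hcard.trans (hf.card_le_sum h2)

theorem isUniversal_of_sum_eq_apply (hf : IsRomanDominating G f) {v : V}
    (hv : ∑ u, f u = f v) : G.IsUniversal v := by
  classical
  have hzero : ∀ u, v ≠ u → f u = 0 := fun u hvu => by
    have := Finset.sum_le_sum_of_subset (f := f) (Finset.subset_univ {v, u})
    rw [Finset.sum_pair hvu] at this
    omega
  intro u hvu
  obtain ⟨w, huw, hw⟩ := hf.2 u (hzero u hvu)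
  obtain rfl : v = w := by
    by_contra hvw
    rw [hzero w hvw] at hw
    omega
  exact huw.symm

end IsRomanDominating

theorem isRomanDominating_pi_single {V : Type*} [DecidableEq V] {G : SimpleGraph V} {v : V}
    (hv : G.IsUniversal v) : IsRomanDominating G (Pi.single v 2) := by
  refine ⟨fun u => ?_, fun u hu => ?_⟩
  · by_cases huv : u = v <;> simp [huv]
  · have hvu : v ≠ u := by
      rintro rfl
      simp at hu
    exact ⟨v, (hv hvu).symm, by simp⟩

section romanNumber

variable {V : Type*} [Fintype V] {G : SimpleGraph V}

theorem romanNumber_le_sum {f : V → ℕ} (hf : IsRomanDominating G f) :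
    romanNumber G ≤ ∑ v, f v :=
  Nat.sInf_le ⟨f, hf, rfl⟩

theorem exists_isRomanDominating_sum_eq_romanNumber (G : SimpleGraph V) :
    ∃ f, IsRomanDominating G f ∧ ∑ v, f v = romanNumber G :=
  Nat.sInf_mem (s := {w | ∃ f : V → ℕ, IsRomanDominating G f ∧ ∑ v, f v = w})
    ⟨_, fun _ => 1, ⟨fun _ => one_le_two, fun _ h => absurd h one_ne_zero⟩, rfl⟩

theorem two_le_romanNumber (hcard : 2 ≤ Fintype.card V) : 2 ≤ romanNumber G := by
  obtain ⟨f, hf, hsum⟩ := exists_isRomanDominating_sum_eq_romanNumber G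
  exact hsum ▸ hf.two_le_sum hcard

theorem romanNumber_le_two_of_isUniversal {v : V} (hv : G.IsUniversal v) :
    romanNumber G ≤ 2 := by
  classical
  simpa using romanNumber_le_sum (isRomanDominating_pi_single hv)

end romanNumber

theorem romanNumber_eq_two_iff {V : Type*} [Fintype V] (G : SimpleGraph V)
    [DecidableRel G.Adj] (hcard : 2 ≤ Fintype.card V)
    (hnotiso : ¬ Nonempty (G ≃g (⊥ : SimpleGraph (Fin 2)))) :
    romanNumber G = 2 ↔ G.maxDegree = Fintype.card V - 1 := by
  have : Nonempty V := Fintype.card_pos_iff.1 (by omega)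
  rw [maxDegree_eq_card_sub_one_iff]
  refine ⟨fun h => ?_, fun ⟨v, hv⟩ => (romanNumber_le_two_of_isUniversal hv).antisymm
    (two_le_romanNumber hcard)⟩
  obtain ⟨f, hf, hsum⟩ := exists_isRomanDominating_sum_eq_romanNumber G
  rw [h] at hsum
  by_cases h2 : ∃ v, f v = 2
  · obtain ⟨v, hv⟩ := h2
    exact ⟨v, hf.isUniversal_of_sum_eq_apply (hsum.trans hv.symm)⟩
  · push Not at h2
    have hc : Fintype.card V = 2 := le_antisymm (hsum ▸ hf.card_le_sum h2) hcard
    obtain ⟨a, b, hab⟩ := exists_adj_of_not_nonempty_iso_bot hc hnotiso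
    exact ⟨a, .of_adj_of_card_eq_two hc hab⟩
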